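/- Every Wahl chain is obtained from [4] by finitely many applications of the two operations [e_1,...,e_r] ↦ [e_1+1,e_2,...,e_r,2] and [e_1,...,e_r] ↦ [2,e_1,...,e_{r-1},e_r+1]. Conversely, every sequence obtained from [4] by these operations is a Wahl chain. -/

import Mathlib

/-- The value of a Hirzebruch–Jung continued fraction `[e₁,…,e_r]`,
computed as `e₁ - 1/[e₂,…,e_r]` with `[e_r] = e_r`. -/
def hjVal : List ℤ → ℚ
  | [] => 0
  | [x] => (x : ℚ)
  | x :: y :: xs => (x : ℚ) - (hjVal (y :: xs))⁻¹

/-- `IsHJ m q L` : `L` is the HJ continued fraction expansion of `m/q`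
(all entries at least 2 and value `m/q`). -/
def IsHJ (m q : ℤ) (L : List ℤ) : Prop :=
  (∀ e ∈ L, 2 ≤ e) ∧ hjVal L = (m : ℚ) / (q : ℚ)

/-- `IsWahlChain n a L` : `L` is the Wahl chain of `n²/(na-1)` for coprime `0 < a < n`. -/
def IsWahlChain (n a : ℤ) (L : List ℤ) : Prop :=
  0 < a ∧ a < n ∧ Int.gcd n a = 1 ∧ IsHJ (n ^ 2) (n * a - 1) L

/-- Chains generated from `[4]` by the two Wahl operations
`[e₁,…,e_r] ↦ [e₁+1,e₂,…,e_r,2]` and `[e₁,…,e_r] ↦ [2,e₁,…,e_{r-1},e_r+1]`. -/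
inductive WahlGen : List ℤ → Prop
  | base : WahlGen [4]
  | op1 (e : ℤ) (L : List ℤ) : WahlGen (e :: L) → WahlGen ((e + 1) :: (L ++ [2]))
  | op2 (e : ℤ) (L : List ℤ) : WahlGen (L ++ [e]) → WahlGen (2 :: (L ++ [e + 1]))

/-!
Encode a chain `L` by the product `hjMat L` of the matrices `[[e, -1], [1, 0]]`; for entries
`≥ 2` its first column `(m, q)` gives the value `m/q` of the chain. Each operation multiplies this
product by fixed matrices on both sides, sending `wahlMat n a` to `wahlMat (n + a) a` and to
`wahlMat (2n - a) n` respectively, so generated chains are Wahl chains. Conversely, the inverse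
moves `(n, a) ↦ (n - a, a)` for `2a < n` and `(n, a) ↦ (a, 2a - n)` for `2a > n` descend from any
coprime `0 < a < n` to `(2, 1)`, so every Wahl value `n²/(na - 1)` is the value of a generated
chain; and a Hirzebruch–Jung expansion is determined by its value, whose ceiling is its first entry.
-/

def hjGen (x : ℤ) : Matrix (Fin 2) (Fin 2) ℤ := !![x, -1; 1, 0]

def hjMat (L : List ℤ) : Matrix (Fin 2) (Fin 2) ℤ := (L.map hjGen).prod

-- `hjMat` of the Wahl chain of `n²/(na - 1)`.
def wahlMat (n a : ℤ) : Matrix (Fin 2) (Fin 2) ℤ :=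
  !![n ^ 2, n * a + 1 - n ^ 2; n * a - 1, a ^ 2 - n * a + 1]

@[simp] lemma hjMat_nil : hjMat [] = 1 := rfl

@[simp] lemma hjMat_cons (x : ℤ) (L : List ℤ) : hjMat (x :: L) = hjGen x * hjMat L := by
  simp [hjMat]

@[simp] lemma hjMat_append (L L' : List ℤ) : hjMat (L ++ L') = hjMat L * hjMat L' := by
  simp [hjMat]

lemma hjGen_add_one_eq_mul_left (x : ℤ) : hjGen (x + 1) = !![1, 1; 0, 1] * hjGen x := by
  simp [hjGen]

lemma hjGen_add_one_eq_mul_right (x : ℤ) : hjGen (x + 1) = hjGen x * !![1, 0; -1, 1] := by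
  simp [hjGen]

lemma hjMat_op1 (e : ℤ) (L : List ℤ) :
    hjMat ((e + 1) :: (L ++ [2])) = !![1, 1; 0, 1] * hjMat (e :: L) * hjGen 2 := by
  simp [hjGen_add_one_eq_mul_left, hjMat, mul_assoc]

lemma hjMat_op2 (e : ℤ) (L : List ℤ) :
    hjMat (2 :: (L ++ [e + 1])) = hjGen 2 * hjMat (L ++ [e]) * !![1, 0; -1, 1] := by
  simp [hjGen_add_one_eq_mul_right, hjMat, mul_assoc]

lemma wahlMat_op1 (n a : ℤ) :
    !![1, 1; 0, 1] * wahlMat n a * hjGen 2 = wahlMat (n + a) a := by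
  simp only [wahlMat, hjGen, Matrix.mul_fin_two]
  ext i j
  fin_cases i <;> fin_cases j <;> simp <;> ring

lemma wahlMat_op2 (n a : ℤ) :
    hjGen 2 * wahlMat n a * !![1, 0; -1, 1] = wahlMat (2 * n - a) n := by
  simp only [wahlMat, hjGen, Matrix.mul_fin_two]
  ext i j
  fin_cases i <;> fin_cases j <;> simp <;> ring

-- Also for `L = []`, since `hjVal [] = 0` and `0⁻¹ = 0`.
lemma hjVal_cons (x : ℤ) (L : List ℤ) : hjVal (x :: L) = x - (hjVal L)⁻¹ := by
  cases L <;> simp [hjVal]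

lemma one_lt_hjVal {L : List ℤ} (hL : ∀ e ∈ L, 2 ≤ e) (hne : L ≠ []) : 1 < hjVal L := by
  induction L with
  | nil => exact absurd rfl hne
  | cons x t ih =>
    have hx : (2 : ℚ) ≤ x := by exact_mod_cast hL x (by simp)
    have ht : (hjVal t)⁻¹ < 1 := by
      rcases eq_or_ne t [] with rfl | ht
      · simp [hjVal]
      · exact inv_lt_one_of_one_lt₀ (ih (fun e he => hL e (by simp [he])) ht)
    rw [hjVal_cons]
    linarith

lemma inv_hjVal_mem_Ico {L : List ℤ} (hL : ∀ e ∈ L, 2 ≤ e) : (hjVal L)⁻¹ ∈ Set.Ico 0 1 := by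
  rcases eq_or_ne L [] with rfl | hne
  · simp [hjVal]
  · have h := one_lt_hjVal hL hne
    exact ⟨by positivity, inv_lt_one_of_one_lt₀ h⟩

lemma ceil_hjVal_cons (x : ℤ) {L : List ℤ} (hL : ∀ e ∈ L, 2 ≤ e) : ⌈hjVal (x :: L)⌉ = x := by
  obtain ⟨h0, h1⟩ := inv_hjVal_mem_Ico hL
  rw [Int.ceil_eq_iff, hjVal_cons]
  constructor <;> linarith

lemma hjVal_injOn : Set.InjOn hjVal {L | ∀ e ∈ L, 2 ≤ e} := by
  intro L hL L' hL' h
  induction L generalizing L' with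
  | nil =>
    cases L' with
    | nil => rfl
    | cons x' t' =>
      have := one_lt_hjVal hL' (List.cons_ne_nil x' t')
      rw [← h, hjVal] at this
      norm_num at this
  | cons x t ih =>
    cases L' with
    | nil =>
      have := one_lt_hjVal hL (List.cons_ne_nil x t)
      rw [h, hjVal] at this
      norm_num at this
    | cons x' t' =>
      have ht : ∀ e ∈ t, 2 ≤ e := fun e he => hL e (by simp [he])
      have ht' : ∀ e ∈ t', 2 ≤ e := fun e he => hL' e (by simp [he])
      obtain rfl : x = x' := by rw [← ceil_hjVal_cons x ht, h, ceil_hjVal_cons x' ht']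
      rw [hjVal_cons, hjVal_cons, sub_right_inj, inv_inj] at h
      rw [ih ht ht' h]

-- For `L = []` the right-hand side is `1 / 0 = 0`.
lemma hjVal_eq_div {L : List ℤ} (hL : ∀ e ∈ L, 2 ≤ e) :
    hjVal L = (hjMat L 0 0 : ℚ) / hjMat L 1 0 := by
  induction L with
  | nil => simp [hjVal]
  | cons x t ih =>
    have ht : ∀ e ∈ t, 2 ≤ e := fun e he => hL e (by simp [he])
    have hA : (hjMat t 0 0 : ℚ) ≠ 0 := by
      rcases eq_or_ne t [] with rfl | hne
      · simp
      · intro h0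
        have := one_lt_hjVal ht hne
        rw [ih ht, h0, zero_div] at this
        norm_num at this
    rw [hjVal_cons, ih ht, inv_div, hjMat_cons]
    simp only [hjGen, Matrix.mul_apply, Matrix.of_apply, Matrix.cons_val', Matrix.cons_val_fin_one,
      Matrix.cons_val_zero, Matrix.cons_val_one, Fin.sum_univ_two, neg_mul, one_mul, zero_mul,
      add_zero, Int.cast_add, Int.cast_mul, Int.cast_neg]
    field_simp
    ring

lemma isHJ_of_hjMat_eq_wahlMat {n a : ℤ} {L : List ℤ} (hL : ∀ e ∈ L, 2 ≤ e)
    (hM : hjMat L = wahlMat n a) : IsHJ (n ^ 2) (n * a - 1) L := by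
  refine ⟨hL, ?_⟩
  rw [hjVal_eq_div hL, hM]
  simp [wahlMat]

namespace WahlGen

lemma ne_nil {L : List ℤ} (h : WahlGen L) : L ≠ [] := by
  cases h <;> simp

lemma two_le {L : List ℤ} (h : WahlGen L) : ∀ e ∈ L, 2 ≤ e := by
  induction h with
  | base => simp
  | op1 e L _ ih =>
    have := ih e (by simp)
    grind
  | op2 e L _ ih =>
    have := ih e (by simp)
    grind

lemma exists_hjMat_eq_wahlMat {L : List ℤ} (h : WahlGen L) :
    ∃ n a : ℤ, 0 < a ∧ a < n ∧ IsCoprime n a ∧ hjMat L = wahlMat n a := by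
  induction h with
  | base => exact ⟨2, 1, one_pos, one_lt_two, isCoprime_one_right, by simp [hjGen, wahlMat]⟩
  | op1 e L _ ih =>
    obtain ⟨n, a, ha, han, ⟨u, v, huv⟩, hM⟩ := ih
    refine ⟨n + a, a, ha, by omega, ⟨u, v - u, by linear_combination huv⟩, ?_⟩
    rw [hjMat_op1, hM, wahlMat_op1]
  | op2 e L _ ih =>
    obtain ⟨n, a, ha, han, ⟨u, v, huv⟩, hM⟩ := ih
    refine ⟨2 * n - a, n, by omega, by omega, ⟨-v, u + 2 * v, by linear_combination huv⟩, ?_⟩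
    rw [hjMat_op2, hM, wahlMat_op2]

end WahlGen

lemma exists_wahlGen_hjMat_eq {n a : ℤ} (ha : 0 < a) (han : a < n) (hcop : IsCoprime n a) :
    ∃ L, WahlGen L ∧ hjMat L = wahlMat n a := by
  obtain ⟨u, v, huv⟩ := hcop
  rcases lt_trichotomy (2 * a) n with h | h | h
  · obtain ⟨L, hgen, hM⟩ := exists_wahlGen_hjMat_eq (n := n - a) ha (by omega)
      ⟨u, u + v, by linear_combination huv⟩
    obtain ⟨e, L, rfl⟩ := List.exists_cons_of_ne_nil hgen.ne_nil
    refine ⟨_, hgen.op1 e L, ?_⟩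
    rw [hjMat_op1, hM, wahlMat_op1, sub_add_cancel]
  · obtain rfl : a = 1 := Int.eq_one_of_mul_eq_one_right (b := 2 * u + v) ha.le
      (by linear_combination huv + u * h)
    obtain rfl : n = 2 := by omega
    exact ⟨[4], WahlGen.base, by simp [hjGen, wahlMat]⟩
  · obtain ⟨L, hgen, hM⟩ := exists_wahlGen_hjMat_eq (n := a) (a := 2 * a - n) (by omega) (by omega)
      ⟨v + 2 * u, -u, by linear_combination huv⟩
    obtain ⟨L, e, rfl⟩ := (List.eq_nil_or_concat' L).resolve_left hgen.ne_nil
    refine ⟨_, hgen.op2 e L, ?_⟩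
    rw [hjMat_op2, hM, wahlMat_op2, sub_sub_cancel]
termination_by n.toNat
decreasing_by all_goals omega

/-- A chain is a Wahl chain iff it is generated from `[4]` by the two operations. -/
theorem stmt2 (L : List ℤ) :
    (∃ n a : ℤ, IsWahlChain n a L) ↔ WahlGen L := by
  constructor
  · rintro ⟨n, a, ha, han, hgcd, hL, hval⟩
    obtain ⟨L', hgen, hM⟩ :=
      exists_wahlGen_hjMat_eq ha han (Int.isCoprime_iff_gcd_eq_one.mpr hgcd)
    obtain rfl : L = L' :=
      hjVal_injOn hL hgen.two_le (hval.trans (isHJ_of_hjMat_eq_wahlMat hgen.two_le hM).2.symm)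
    exact hgen
  · intro h
    obtain ⟨n, a, ha, han, hcop, hM⟩ := h.exists_hjMat_eq_wahlMat
    exact ⟨n, a, ha, han, Int.isCoprime_iff_gcd_eq_one.mp hcop,
      isHJ_of_hjMat_eq_wahlMat h.two_le hM⟩
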